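/- arXiv:2304.12224 — 10 statements merged into one kernel-verified Lean document; each statement's English description precedes it below -/
import Mathlib

section
/- Suppose qᵀDv ≤ √ω ‖v‖_A ‖q‖_C holds for all vectors v ∈ ℝ^{n_u} and q ∈ ℝ^{n_p} if and only if the symmetric matrix ω·C − D·A⁻¹·Dᵀ is positive semidefinite (i.e., D A⁻¹ Dᵀ ≼ ω C in the Loewner order). -/
/-! `‖·‖_{A⁻¹}` is the dual norm of `‖·‖_A`: `uᵀv ≤ t ‖v‖_A` holds for all `v` iff
`‖u‖_{A⁻¹} ≤ t`, by weighted Cauchy–Schwarz with equality at `v = A⁻¹u`. Applied to `u = Dᵀq`,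
`t = √ω ‖q‖_C` and squared, the hypothesis becomes `qᵀ D A⁻¹ Dᵀ q ≤ ω qᵀ C q` for all `q`,
which is the Loewner inequality. -/

open Matrix

/-- The `M`-weighted norm `‖x‖_M = √(xᵀ M x)`. -/
noncomputable def mnorm {n : ℕ} (M : Matrix (Fin n) (Fin n) ℝ) (x : Fin n → ℝ) : ℝ :=
  Real.sqrt (x ⬝ᵥ M.mulVec x)

namespace Matrix

variable {n : Type*} [Fintype n]

theorem PosSemidef.dotProduct_mulVec_le_sqrt_mul_sqrt {M : Matrix n n ℝ} (hM : M.PosSemidef)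
    (x y : n → ℝ) :
    x ⬝ᵥ M *ᵥ y ≤ √(x ⬝ᵥ M *ᵥ x) * √(y ⬝ᵥ M *ᵥ y) := by
  let := M.toSeminormedAddCommGroup hM
  let := M.toInnerProductSpace hM
  have h := real_inner_le_norm x y
  rw [norm_eq_sqrt_re_inner (𝕜 := ℝ), norm_eq_sqrt_re_inner (𝕜 := ℝ)] at h
  change M *ᵥ y ⬝ᵥ x ≤ √(M *ᵥ x ⬝ᵥ x) * √(M *ᵥ y ⬝ᵥ y) at h
  rwa [dotProduct_comm, dotProduct_comm x, dotProduct_comm y]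

theorem posSemidef_sub_iff_forall_dotProduct_mulVec_le {M N : Matrix n n ℝ}
    (hM : M.IsHermitian) (hN : N.IsHermitian) :
    (M - N).PosSemidef ↔ ∀ x, x ⬝ᵥ N *ᵥ x ≤ x ⬝ᵥ M *ᵥ x := by
  simp only [posSemidef_iff_dotProduct_mulVec, hM.sub hN, true_and, sub_mulVec, dotProduct_sub,
    sub_nonneg]
  rfl

theorem vecMul_dotProduct_mulVec_vecMul {m : Type*} [Fintype m] (M : Matrix n n ℝ)
    (D : Matrix m n ℝ) (q : m → ℝ) :
    q ᵥ* D ⬝ᵥ M *ᵥ (q ᵥ* D) = q ⬝ᵥ (D * M * Dᵀ) *ᵥ q := by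
  rw [← mulVec_mulVec, ← mulVec_mulVec, mulVec_transpose, dotProduct_mulVec q D]

theorem IsSymm.dotProduct_eq_inv_mulVec_dotProduct_mulVec [DecidableEq n] {R : Type*} [CommRing R]
    {A : Matrix n n R} (hA : A.IsSymm) (hdet : IsUnit A.det) (u v : n → R) :
    u ⬝ᵥ v = A⁻¹ *ᵥ u ⬝ᵥ A *ᵥ v := by
  rw [dotProduct_mulVec, ← mulVec_transpose, hA.eq, mulVec_mulVec, mul_nonsing_inv A hdet,
    one_mulVec]

end Matrix

theorem mnorm_nonneg {n : ℕ} (A : Matrix (Fin n) (Fin n) ℝ) (x : Fin n → ℝ) : 0 ≤ mnorm A x :=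
  Real.sqrt_nonneg _

section mnorm

variable {n : ℕ} {A : Matrix (Fin n) (Fin n) ℝ}

theorem dotProduct_eq_inv_mulVec_dotProduct_mulVec (hA : A.PosDef) (u v : Fin n → ℝ) :
    u ⬝ᵥ v = A⁻¹ *ᵥ u ⬝ᵥ A *ᵥ v :=
  (isHermitian_iff_isSymm.mp hA.isHermitian).dotProduct_eq_inv_mulVec_dotProduct_mulVec
    hA.det_pos.ne'.isUnit u v

theorem mnorm_inv_mulVec (hA : A.PosDef) (u : Fin n → ℝ) :
    mnorm A (A⁻¹ *ᵥ u) = mnorm A⁻¹ u := by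
  rw [mnorm, mnorm, ← dotProduct_eq_inv_mulVec_dotProduct_mulVec hA, dotProduct_comm]

theorem forall_dotProduct_le_mul_mnorm_iff (hA : A.PosDef) {u : Fin n → ℝ} {t : ℝ}
    (ht : 0 ≤ t) : (∀ v, u ⬝ᵥ v ≤ t * mnorm A v) ↔ mnorm A⁻¹ u ≤ t := by
  constructor
  · intro h
    have hs : mnorm A⁻¹ u ^ 2 = u ⬝ᵥ A⁻¹ *ᵥ u :=
      Real.sq_sqrt (hA.inv.posSemidef.dotProduct_mulVec_nonneg u)
    have := h (A⁻¹ *ᵥ u)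
    rw [mnorm_inv_mulVec hA, ← hs] at this
    nlinarith [mnorm_nonneg A⁻¹ u]
  · intro h v
    calc u ⬝ᵥ v = A⁻¹ *ᵥ u ⬝ᵥ A *ᵥ v := dotProduct_eq_inv_mulVec_dotProduct_mulVec hA u v
      _ ≤ mnorm A (A⁻¹ *ᵥ u) * mnorm A v :=
        hA.posSemidef.dotProduct_mulVec_le_sqrt_mul_sqrt _ _
      _ ≤ t * mnorm A v := by
        rw [mnorm_inv_mulVec hA]
        exact mul_le_mul_of_nonneg_right h (mnorm_nonneg A v)

end mnorm

theorem stmt_0_general {nu np : ℕ}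
    (A : Matrix (Fin nu) (Fin nu) ℝ) (C : Matrix (Fin np) (Fin np) ℝ)
    (D : Matrix (Fin np) (Fin nu) ℝ) (ω : ℝ) (hω : 0 < ω)
    (hA : A.PosDef) (hC : C.PosDef) :
    (∀ (v : Fin nu → ℝ) (q : Fin np → ℝ),
        q ⬝ᵥ D.mulVec v ≤ Real.sqrt ω * mnorm A v * mnorm C q) ↔
      (ω • C - D * A⁻¹ * Dᵀ).PosSemidef :=
  calc (∀ (v : Fin nu → ℝ) (q : Fin np → ℝ),
        q ⬝ᵥ D.mulVec v ≤ Real.sqrt ω * mnorm A v * mnorm C q)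
      ↔ ∀ q, mnorm A⁻¹ (q ᵥ* D) ≤ √ω * mnorm C q := by
        rw [forall_comm]
        refine forall_congr' fun q => ?_
        rw [← forall_dotProduct_le_mul_mnorm_iff hA
          (mul_nonneg (Real.sqrt_nonneg ω) (mnorm_nonneg C q))]
        simp only [dotProduct_mulVec, mul_right_comm]
    _ ↔ ∀ q, q ⬝ᵥ (D * A⁻¹ * Dᵀ) *ᵥ q ≤ q ⬝ᵥ (ω • C) *ᵥ q := by
        refine forall_congr' fun q => ?_
        have hCq := hC.posSemidef.dotProduct_mulVec_nonneg q
        rw [mnorm, mnorm, ← Real.sqrt_mul hω.le, Real.sqrt_le_sqrt_iff (by positivity),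
          vecMul_dotProduct_mulVec_vecMul, smul_mulVec, dotProduct_smul, smul_eq_mul]
    _ ↔ (ω • C - D * A⁻¹ * Dᵀ).PosSemidef :=
        (posSemidef_sub_iff_forall_dotProduct_mulVec_le
          (hC.isHermitian.smul (IsSelfAdjoint.all ω))
          (isHermitian_mul_mul_conjTranspose D hA.inv.isHermitian)).symm

theorem stmt_0 {nu np : ℕ} (hnu : 0 < nu) (hnp : 0 < np)
    (A : Matrix (Fin nu) (Fin nu) ℝ) (C : Matrix (Fin np) (Fin np) ℝ)
    (D : Matrix (Fin np) (Fin nu) ℝ) (ω : ℝ) (hω : 0 < ω)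
    (hA : A.PosDef) (hC : C.PosDef) :
    (∀ (v : Fin nu → ℝ) (q : Fin np → ℝ),
        q ⬝ᵥ D.mulVec v ≤ Real.sqrt ω * mnorm A v * mnorm C q) ↔
      (ω • C - D * A⁻¹ * Dᵀ).PosSemidef :=
  stmt_0_general A C D ω hω hA hC
end

section
/- Every eigenvalue μ of the matrix C_τ⁻¹ D A⁻¹ Dᵀ is real and satisfies 0 ≤ μ ≤ ω, provided qᵀDv ≤ √ω ‖v‖_A ‖q‖_C holds for all v ∈ ℝ^{n_u} and q ∈ ℝ^{n_p}. -/
open Matrix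

/-!
Write `M = C + τB` and `S = D A⁻¹ Dᵀ`. An eigenvector `v` of `M⁻¹S` satisfies `S v = μ M v`, so
`μ = v* S v / v* M v` is a quotient of a nonnegative by a positive number. Testing the coupling
inequality with `v = A⁻¹ Dᵀ q` gives `qᵀ S q ≤ ω qᵀ C q ≤ ω qᵀ M q`, i.e. `ωM - S` is positive
semidefinite, which bounds the quotient by `ω`.
-/

open scoped ComplexOrder

namespace Matrix

variable {n : Type*} [Fintype n]

theorem exists_mulVec_eq_smul_of_mem_spectrum [DecidableEq n] {K : Type*} [Field K]
    {T : Matrix n n K} {μ : K} (hμ : μ ∈ spectrum K T) : ∃ v ≠ 0, T *ᵥ v = μ • v := by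
  rw [← spectrum_toLin', ← Module.End.hasEigenvalue_iff_mem_spectrum] at hμ
  obtain ⟨v, hv⟩ := hμ.exists_hasEigenvector
  exact ⟨v, hv.2, by simpa using hv.apply_eq_smul⟩

theorem PosSemidef.map_algebraMap_real {R : Matrix n n ℝ} (hR : R.PosSemidef) :
    (R.map (algebraMap ℝ ℂ)).PosSemidef := by
  classical
  obtain ⟨L, rfl⟩ : ∃ L : Matrix n n ℝ, R = Lᴴ * L := by
    open scoped MatrixOrder in exact CStarAlgebra.nonneg_iff_eq_star_mul_self.mp hR.nonneg
  rw [Matrix.map_mul, conjTranspose_map _ (by simp [Function.Semiconj])]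
  exact posSemidef_conjTranspose_mul_self _

theorem PosDef.map_algebraMap_real [DecidableEq n] {R : Matrix n n ℝ} (hR : R.PosDef) :
    (R.map (algebraMap ℝ ℂ)).PosDef := by
  rw [hR.posSemidef.map_algebraMap_real.posDef_iff_det_ne_zero, ← RingHom.mapMatrix_apply,
    ← RingHom.map_det]
  exact (algebraMap ℝ ℂ).injective.ne_iff' (map_zero _) |>.mpr hR.det_pos.ne'

theorem mem_Icc_of_mem_spectrum_of_mul_eq [DecidableEq n] {M S T : Matrix n n ℂ} {ω μ : ℂ}
    (hM : M.PosDef) (hS : S.PosSemidef) (hωMS : (ω • M - S).PosSemidef) (hMT : M * T = S)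
    (hμ : μ ∈ spectrum ℂ T) : μ ∈ Set.Icc 0 ω := by
  obtain ⟨v, hv, hTv⟩ := exists_mulVec_eq_smul_of_mem_spectrum hμ
  have hSv : S *ᵥ v = μ • (M *ᵥ v) := by rw [← hMT, ← mulVec_mulVec, hTv, mulVec_smul]
  have hα : 0 < star v ⬝ᵥ M *ᵥ v := hM.dotProduct_mulVec_pos hv
  have hβ : star v ⬝ᵥ S *ᵥ v = μ * (star v ⬝ᵥ M *ᵥ v) := by
    rw [hSv, dotProduct_smul, smul_eq_mul]
  have hμ_eq : μ = (star v ⬝ᵥ S *ᵥ v) / (star v ⬝ᵥ M *ᵥ v) := by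
    rw [hβ, mul_div_cancel_right₀ _ hα.ne']
  have hβ_le : star v ⬝ᵥ S *ᵥ v ≤ ω * (star v ⬝ᵥ M *ᵥ v) := by
    have := hωMS.dotProduct_mulVec_nonneg v
    rwa [sub_mulVec, smul_mulVec, dotProduct_sub, dotProduct_smul, smul_eq_mul, sub_nonneg] at this
  rw [hμ_eq]
  exact ⟨div_nonneg (hS.dotProduct_mulVec_nonneg v) hα.le, (div_le_iff₀ hα).2 hβ_le⟩

theorem im_eq_zero_and_re_mem_Icc_of_mem_spectrum_map [DecidableEq n] {M S T : Matrix n n ℝ}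
    {ω : ℝ} (hM : M.PosDef) (hS : S.PosSemidef) (hωMS : (ω • M - S).PosSemidef) (hMT : M * T = S)
    {μ : ℂ} (hμ : μ ∈ spectrum ℂ (T.map (algebraMap ℝ ℂ))) :
    μ.im = 0 ∧ μ.re ∈ Set.Icc 0 ω := by
  have hωMS' : ((ω : ℂ) • M.map (algebraMap ℝ ℂ) - S.map (algebraMap ℝ ℂ)).PosSemidef := by
    convert hωMS.map_algebraMap_real using 1
    ext i j
    simp
  obtain ⟨h0, hω⟩ := mem_Icc_of_mem_spectrum_of_mul_eq hM.map_algebraMap_real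
    hS.map_algebraMap_real hωMS' (by rw [← Matrix.map_mul, hMT]) hμ
  rw [Complex.nonneg_iff] at h0
  rw [Complex.le_def, Complex.ofReal_re, Complex.ofReal_im] at hω
  exact ⟨h0.2.symm, h0.1, hω.1⟩

end Matrix

theorem Matrix.PosDef.posSemidef_mul_inv_mul_transpose {m n : Type*} [Fintype m] [Fintype n]
    [DecidableEq n] {A : Matrix n n ℝ} (hA : A.PosDef) (D : Matrix m n ℝ) :
    (D * A⁻¹ * Dᵀ).PosSemidef := by
  simpa using hA.inv.posSemidef.conjTranspose_mul_mul_same Dᵀ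

theorem le_mul_of_le_sqrt_mul_sqrt_mul_sqrt {s c ω : ℝ} (hs : 0 ≤ s) (hc : 0 ≤ c) (hω : 0 ≤ ω)
    (h : s ≤ √ω * √s * √c) : s ≤ ω * c := by
  nlinarith [Real.sq_sqrt hs, Real.sq_sqrt hc, Real.sq_sqrt hω, Real.sqrt_nonneg s,
    Real.sqrt_nonneg c, Real.sqrt_nonneg ω, sq_nonneg (√s - √ω * √c)]

section Coupling

variable {nu np : ℕ} {A : Matrix (Fin nu) (Fin nu) ℝ} {C : Matrix (Fin np) (Fin np) ℝ}
  {D : Matrix (Fin np) (Fin nu) ℝ} {ω : ℝ}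

theorem dotProduct_mul_inv_mul_transpose_mulVec_le (hA : A.PosDef) (hC : C.PosSemidef)
    (hω : 0 ≤ ω) (hcoup : ∀ (v : Fin nu → ℝ) (q : Fin np → ℝ),
      q ⬝ᵥ D.mulVec v ≤ Real.sqrt ω * mnorm A v * mnorm C q) (q : Fin np → ℝ) :
    q ⬝ᵥ (D * A⁻¹ * Dᵀ) *ᵥ q ≤ ω * (q ⬝ᵥ C *ᵥ q) := by
  set v := A⁻¹ *ᵥ Dᵀ *ᵥ q
  have hDv : q ⬝ᵥ (D * A⁻¹ * Dᵀ) *ᵥ q = q ⬝ᵥ D *ᵥ v := by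
    simp only [v, mulVec_mulVec, Matrix.mul_assoc]
  have hAv : v ⬝ᵥ A *ᵥ v = q ⬝ᵥ D *ᵥ v := by
    rw [mulVec_mulVec, mul_nonsing_inv _ hA.det_pos.ne'.isUnit, one_mulVec, dotProduct_mulVec,
      vecMul_transpose, dotProduct_comm]
  have hs : 0 ≤ q ⬝ᵥ D *ᵥ v := hAv ▸ hA.posSemidef.dotProduct_mulVec_nonneg v
  rw [hDv]
  refine le_mul_of_le_sqrt_mul_sqrt_mul_sqrt hs (hC.dotProduct_mulVec_nonneg q) hω ?_
  simpa only [mnorm, hAv] using hcoup v q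

theorem posSemidef_smul_sub_mul_inv_mul_transpose (hA : A.PosDef) (hC : C.PosSemidef)
    (hω : 0 ≤ ω) (hcoup : ∀ (v : Fin nu → ℝ) (q : Fin np → ℝ),
      q ⬝ᵥ D.mulVec v ≤ Real.sqrt ω * mnorm A v * mnorm C q) :
    (ω • C - D * A⁻¹ * Dᵀ).PosSemidef := by
  have hS := hA.posSemidef_mul_inv_mul_transpose D
  refine .of_dotProduct_mulVec_nonneg ((hC.smul hω).isHermitian.sub hS.isHermitian) fun q ↦ ?_
  have := dotProduct_mul_inv_mul_transpose_mulVec_le hA hC hω hcoup q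
  simp only [star_trivial, sub_mulVec, smul_mulVec, dotProduct_sub, dotProduct_smul, smul_eq_mul]
  linarith

end Coupling

theorem stmt_2_general {nu np : ℕ}
    (A : Matrix (Fin nu) (Fin nu) ℝ)
    (B C : Matrix (Fin np) (Fin np) ℝ)
    (D : Matrix (Fin np) (Fin nu) ℝ) (τ ω : ℝ) (hτ : 0 < τ) (hω : 0 < ω)
    (hA : A.PosDef) (hB : B.PosDef) (hC : C.PosDef)
    (hcoup : ∀ (v : Fin nu → ℝ) (q : Fin np → ℝ),
      q ⬝ᵥ D.mulVec v ≤ Real.sqrt ω * mnorm A v * mnorm C q) :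
    ∀ μ ∈ spectrum ℂ (((C + τ • B)⁻¹ * D * A⁻¹ * Dᵀ).map (algebraMap ℝ ℂ)),
      μ.im = 0 ∧ 0 ≤ μ.re ∧ μ.re ≤ ω := by
  intro μ hμ
  have hCτ : (C + τ • B).PosDef := hC.add_posSemidef (hB.posSemidef.smul hτ.le)
  have hωCτ : (ω • (C + τ • B) - D * A⁻¹ * Dᵀ).PosSemidef := by
    convert (posSemidef_smul_sub_mul_inv_mul_transpose hA hC.posSemidef hω.le hcoup).add
      (hB.posSemidef.smul (mul_nonneg hω.le hτ.le)) using 1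
    module
  have hmul : (C + τ • B) * ((C + τ • B)⁻¹ * D * A⁻¹ * Dᵀ) = D * A⁻¹ * Dᵀ := by
    simp only [← Matrix.mul_assoc, mul_nonsing_inv _ hCτ.det_pos.ne'.isUnit, Matrix.one_mul]
  exact im_eq_zero_and_re_mem_Icc_of_mem_spectrum_map hCτ
    (hA.posSemidef_mul_inv_mul_transpose D) hωCτ hmul hμ

theorem stmt_2 {nu np : ℕ} (hnu : 0 < nu) (hnp : 0 < np)
    (A : Matrix (Fin nu) (Fin nu) ℝ)
    (B C : Matrix (Fin np) (Fin np) ℝ)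
    (D : Matrix (Fin np) (Fin nu) ℝ) (τ ω : ℝ) (hτ : 0 < τ) (hω : 0 < ω)
    (hA : A.PosDef) (hB : B.PosDef) (hC : C.PosDef)
    (hcoup : ∀ (v : Fin nu → ℝ) (q : Fin np → ℝ),
      q ⬝ᵥ D.mulVec v ≤ Real.sqrt ω * mnorm A v * mnorm C q) :
    ∀ μ ∈ spectrum ℂ (((C + τ • B)⁻¹ * D * A⁻¹ * Dᵀ).map (algebraMap ℝ ℂ)),
      μ.im = 0 ∧ 0 ≤ μ.re ∧ μ.re ≤ ω :=
  stmt_2_general A B C D τ ω hτ hω hA hB hC hcoup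
end

section
/- Let γ ∈ (0,1] and define the block matrices M := (1/γ)·[[A, 0],[D, C_τ]] and N := [[0, Dᵀ],[0, 0]] + ((1−γ)/γ)·[[A, 0],[D, C_τ]]. If qᵀDv ≤ √ω ‖v‖_A ‖q‖_C for all v, q, then the spectral radius of M⁻¹N satisfies ρ(M⁻¹N) ≤ max{1−γ, γω−(1−γ)}. -/
/-!
Writing `L := [[A, 0], [D, C_τ]]` and `K := [[0, Dᵀ], [0, 0]]`, we have `M⁻¹N = (1 - γ) + γ L⁻¹K`,
so every eigenvalue is `μ = 1 - γ + γθ` with `Kx = θLx`. Pairing the two block rows of this pencil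
with `u*` and `p*` (where `x = (u, p)`) gives `θ u*Au = -p*C_τp`, so `θ` is real and `θ ≤ 0`. For
a real eigenvector the coupling bound then reads `p C_τ p ≤ √ω ‖u‖_A ‖p‖_{C_τ}`, whence
`p C_τ p ≤ ω uAu`, i.e. `θ ≥ -ω`. Hence `μ ∈ [1 - γ - γω, 1 - γ]`.
-/

open Matrix

open scoped ComplexOrder MatrixOrder

theorem Matrix.PosDef.map_ofReal {n : Type*} [Fintype n] [DecidableEq n] {A : Matrix n n ℝ}
    (hA : A.PosDef) : (A.map (algebraMap ℝ ℂ)).PosDef := by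
  obtain ⟨B, hB⟩ := CStarAlgebra.nonneg_iff_eq_star_mul_self.mp hA.posSemidef.nonneg
  have hmap : A.map (algebraMap ℝ ℂ) = (B.map (algebraMap ℝ ℂ))ᴴ * B.map (algebraMap ℝ ℂ) := by
    rw [hB, Matrix.map_mul, star_eq_conjTranspose, conjTranspose_map _ (fun _ => by simp)]
  refine (hmap ▸ posSemidef_conjTranspose_mul_self _ :).posDef_iff_det_ne_zero.mpr ?_
  rw [← RingHom.mapMatrix_apply, ← RingHom.map_det]
  exact (map_ne_zero _).mpr hA.det_pos.ne'

theorem Matrix.exists_mulVec_eq_smul_of_mem_spectrum_s3 {K n : Type*} [Field K] [Fintype n]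
    [DecidableEq n] {P : Matrix n n K} {μ : K} (hμ : μ ∈ spectrum K P) :
    ∃ x ≠ 0, P *ᵥ x = μ • x := by
  rw [← spectrum_toLin', ← Module.End.hasEigenvalue_iff_mem_spectrum] at hμ
  obtain ⟨x, hx⟩ := hμ.exists_hasEigenvector
  exact ⟨x, hx.2, by simpa using hx.apply_eq_smul⟩

theorem Matrix.exists_mulVec_eq_smul_mulVec_of_map {R S n : Type*} [CommRing R] [IsDomain R]
    [CommRing S] [IsDomain S] [Fintype n] [DecidableEq n] {f : R →+* S}
    (hf : Function.Injective f) {K L : Matrix n n R} {r : R} {x : n → S} (hx : x ≠ 0)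
    (h : K.map f *ᵥ x = f r • L.map f *ᵥ x) : ∃ y ≠ 0, K *ᵥ y = r • L *ᵥ y := by
  have hdet : (K - r • L).det = 0 := by
    rw [← map_eq_zero_iff f hf, RingHom.map_det, ← exists_mulVec_eq_zero_iff]
    refine ⟨x, hx, ?_⟩
    rw [RingHom.mapMatrix_apply, Matrix.map_sub f (map_sub f), map_smul' f _ _ (map_mul f),
      sub_mulVec, smul_mulVec, h, sub_self]
  obtain ⟨y, hy, hKy⟩ := exists_mulVec_eq_zero_iff.mpr hdet
  exact ⟨y, hy, by rwa [sub_mulVec, smul_mulVec, sub_eq_zero] at hKy⟩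

theorem exists_pencil_eigenvector_of_mem_spectrum {ι : Type*} [Fintype ι] [DecidableEq ι]
    {K L M N : Matrix ι ι ℝ} {γ : ℝ} (hγ : γ ≠ 0) (hL : IsUnit L.det)
    (hM : M = (1 / γ) • L) (hN : N = K + ((1 - γ) / γ) • L) {μ : ℂ}
    (hμ : μ ∈ spectrum ℂ ((M⁻¹ * N).map (algebraMap ℝ ℂ))) :
    ∃ θ : ℂ, μ = γ * θ + (1 - γ) ∧
      ∃ x ≠ 0, K.map (algebraMap ℝ ℂ) *ᵥ x = θ • L.map (algebraMap ℝ ℂ) *ᵥ x := by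
  set f := algebraMap ℝ ℂ
  have hMdet : IsUnit M.det := by
    rw [hM, det_smul]
    exact (IsUnit.pow _ (isUnit_iff_ne_zero.mpr (one_div_ne_zero hγ))).mul hL
  obtain ⟨x, hx, hPx⟩ := exists_mulVec_eq_smul_of_mem_spectrum_s3 hμ
  have hNx : N.map f *ᵥ x = μ • M.map f *ᵥ x := by
    rw [← mul_nonsing_inv_cancel_left M N hMdet, Matrix.map_mul, ← mulVec_mulVec, hPx,
      mulVec_smul]
  have hγc : (γ : ℂ) ≠ 0 := by exact_mod_cast hγ
  refine ⟨(μ - (1 - γ)) / γ, by field_simp; ring, x, hx, ?_⟩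
  rw [hN, hM, Matrix.map_add f (map_add f), map_smul' f _ _ (map_mul f), add_mulVec,
    smul_mulVec, map_smul' f _ _ (map_mul f), smul_mulVec] at hNx
  simp only [f, Complex.coe_algebraMap, Complex.ofReal_div, Complex.ofReal_sub,
    Complex.ofReal_one] at hNx ⊢
  rw [← sub_eq_zero, ← sub_eq_zero.mpr hNx]
  field_simp
  module

section SaddlePencil

variable {𝕜 m n : Type*} [Field 𝕜] [StarRing 𝕜] [Fintype m] [Fintype n]
  {A : Matrix m m 𝕜} {C : Matrix n n 𝕜} {D : Matrix n m 𝕜} {θ : 𝕜} {x : m ⊕ n → 𝕜}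

theorem saddlePencil_rows (hθ : θ ≠ 0)
    (h : fromBlocks 0 Dᴴ 0 0 *ᵥ x = θ • fromBlocks A 0 D C *ᵥ x) :
    Dᴴ *ᵥ (x ∘ Sum.inr) = θ • A *ᵥ (x ∘ Sum.inl) ∧
      D *ᵥ (x ∘ Sum.inl) = -(C *ᵥ (x ∘ Sum.inr)) := by
  constructor
  · funext i
    simpa [fromBlocks_mulVec] using congrFun h (Sum.inl i)
  · have hr : θ • (D *ᵥ (x ∘ Sum.inl) + C *ᵥ (x ∘ Sum.inr)) = 0 := by
      funext i
      simpa [fromBlocks_mulVec] using (congrFun h (Sum.inr i)).symm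
    exact eq_neg_of_add_eq_zero_left ((smul_eq_zero.mp hr).resolve_left hθ)

theorem saddlePencil_energy [PartialOrder 𝕜] (hC : C.PosDef) (hx : x ≠ 0) (hθ : θ ≠ 0)
    (h : fromBlocks 0 Dᴴ 0 0 *ᵥ x = θ • fromBlocks A 0 D C *ᵥ x) :
    x ∘ Sum.inl ≠ 0 ∧
      θ * (star (x ∘ Sum.inl) ⬝ᵥ A *ᵥ (x ∘ Sum.inl)) =
        -(star (x ∘ Sum.inr) ⬝ᵥ C *ᵥ (x ∘ Sum.inr)) := by
  obtain ⟨hDp, hDu⟩ := saddlePencil_rows hθ h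
  set u := x ∘ Sum.inl
  set p := x ∘ Sum.inr
  refine ⟨fun hu => hx ?_, ?_⟩
  · have hCp : C *ᵥ p = 0 := by simpa [hu] using hDu.symm
    have hp : p = 0 := by
      by_contra hp
      simpa [hCp] using hC.dotProduct_mulVec_pos hp
    funext i
    rcases i with i | i
    exacts [congrFun hu i, congrFun hp i]
  · calc θ * (star u ⬝ᵥ A *ᵥ u) = star u ⬝ᵥ Dᴴ *ᵥ p := by
          rw [hDp, dotProduct_smul, smul_eq_mul]
      _ = star (D *ᵥ u) ⬝ᵥ p := by rw [dotProduct_mulVec, star_mulVec]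
      _ = -(star p ⬝ᵥ C *ᵥ p) := by
          rw [hDu, star_neg, neg_dotProduct, star_mulVec, ← dotProduct_mulVec, hC.isHermitian.eq]

end SaddlePencil

theorem saddlePencil_eigenvalue_nonpos {𝕜 m n : Type*} [RCLike 𝕜] [Fintype m] [Fintype n]
    {A : Matrix m m 𝕜} {C : Matrix n n 𝕜} {D : Matrix n m 𝕜} {θ : 𝕜} {x : m ⊕ n → 𝕜}
    (hA : A.PosDef) (hC : C.PosDef) (hx : x ≠ 0)
    (h : fromBlocks 0 Dᴴ 0 0 *ᵥ x = θ • fromBlocks A 0 D C *ᵥ x) : θ ≤ 0 := by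
  rcases eq_or_ne θ 0 with rfl | hθ
  · exact le_rfl
  obtain ⟨hu, hE⟩ := saddlePencil_energy hC hx hθ h
  have hpos := hA.dotProduct_mulVec_pos hu
  rw [← eq_div_iff hpos.ne'] at hE
  rw [hE]
  exact div_nonpos_of_nonpos_of_nonneg
    (neg_nonpos.mpr (hC.posSemidef.dotProduct_mulVec_nonneg _)) hpos.le

theorem saddlePencil_exists_real {m n : Type*} [Fintype m] [Fintype n] [DecidableEq m]
    [DecidableEq n] {A : Matrix m m ℝ} {C : Matrix n n ℝ} {D : Matrix n m ℝ} {θ : ℂ}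
    {x : m ⊕ n → ℂ} (hA : A.PosDef) (hC : C.PosDef) (hx : x ≠ 0)
    (h : (fromBlocks 0 Dᵀ 0 0).map (algebraMap ℝ ℂ) *ᵥ x =
      θ • (fromBlocks A 0 D C).map (algebraMap ℝ ℂ) *ᵥ x) :
    ∃ r : ℝ, θ = r ∧ r ≤ 0 ∧ ∃ y ≠ 0, fromBlocks 0 Dᵀ 0 0 *ᵥ y = r • fromBlocks A 0 D C *ᵥ y := by
  set f := algebraMap ℝ ℂ
  have hθ : θ ≤ 0 := by
    refine saddlePencil_eigenvalue_nonpos (D := D.map f) hA.map_ofReal hC.map_ofReal hx ?_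
    have hDt : Dᵀ.map f = (D.map f)ᴴ := by
      rw [← conjTranspose_eq_transpose_of_trivial, conjTranspose_map _ (fun _ => by simp [f])]
    simpa only [fromBlocks_map, Matrix.map_zero _ (map_zero f), hDt] using h
  have hθr : θ = θ.re := Complex.ext rfl (Complex.le_def.mp hθ).2
  refine ⟨θ.re, hθr, (Complex.le_def.mp hθ).1, ?_⟩
  exact exists_mulVec_eq_smul_mulVec_of_map (RingHom.injective f) hx (hθr ▸ h)

theorem mnorm_le_mnorm_add_smul {n : ℕ} {B C : Matrix (Fin n) (Fin n) ℝ} (hB : B.PosSemidef)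
    {τ : ℝ} (hτ : 0 ≤ τ) (q : Fin n → ℝ) : mnorm C q ≤ mnorm (C + τ • B) q := by
  refine Real.sqrt_le_sqrt ?_
  rw [add_mulVec, smul_mulVec, dotProduct_add, dotProduct_smul, smul_eq_mul,
    le_add_iff_nonneg_right]
  exact mul_nonneg hτ (by simpa using hB.dotProduct_mulVec_nonneg q)

theorem neg_le_saddlePencil_eigenvalue {nu np : ℕ} {A : Matrix (Fin nu) (Fin nu) ℝ}
    {C : Matrix (Fin np) (Fin np) ℝ} {D : Matrix (Fin np) (Fin nu) ℝ} {ω r : ℝ}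
    {y : Fin nu ⊕ Fin np → ℝ} (hA : A.PosDef) (hC : C.PosDef) (hω : 0 ≤ ω)
    (hcoup : ∀ v q, q ⬝ᵥ D *ᵥ v ≤ √ω * mnorm A v * mnorm C q) (hy : y ≠ 0)
    (h : fromBlocks 0 Dᵀ 0 0 *ᵥ y = r • fromBlocks A 0 D C *ᵥ y) : -ω ≤ r := by
  rcases eq_or_ne r 0 with rfl | hr
  · simpa using hω
  rw [← conjTranspose_eq_transpose_of_trivial] at h
  obtain ⟨hv, hE⟩ := saddlePencil_energy hC hy hr h
  have hDv := (saddlePencil_rows hr h).2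
  set v := y ∘ Sum.inl
  set q := y ∘ Sum.inr
  set α := v ⬝ᵥ A *ᵥ v
  set β := q ⬝ᵥ C *ᵥ q
  have hα : 0 < α := by simpa using hA.dotProduct_mulVec_pos hv
  have hβ : 0 ≤ β := by simpa using hC.posSemidef.dotProduct_mulVec_nonneg q
  simp only [star_trivial] at hE
  have hβ_sq : β ^ 2 ≤ ω * α * β := by
    have hc := hcoup (-v) q
    rw [mulVec_neg, dotProduct_neg, hDv, dotProduct_neg, neg_neg, mnorm, mnorm, mulVec_neg,
      dotProduct_neg, neg_dotProduct, neg_neg, ← Real.sqrt_mul hω,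
      ← Real.sqrt_mul (mul_nonneg hω hα.le)] at hc
    exact (Real.le_sqrt hβ (by positivity)).mp hc
  by_contra! hlt
  have hωβ : ω * α < β := by nlinarith
  nlinarith [mul_lt_mul_of_pos_right hωβ ((mul_nonneg hω hα.le).trans_lt hωβ)]

theorem stmt_3_general {nu np : ℕ}
    (A : Matrix (Fin nu) (Fin nu) ℝ)
    (B C : Matrix (Fin np) (Fin np) ℝ)
    (D : Matrix (Fin np) (Fin nu) ℝ) (τ ω γ : ℝ)
    (hτ : 0 < τ) (hω : 0 < ω) (hγ0 : 0 < γ)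
    (hA : A.PosDef) (hB : B.PosDef) (hC : C.PosDef)
    (hcoup : ∀ (v : Fin nu → ℝ) (q : Fin np → ℝ),
      q ⬝ᵥ D.mulVec v ≤ Real.sqrt ω * mnorm A v * mnorm C q)
    (M N : Matrix (Fin nu ⊕ Fin np) (Fin nu ⊕ Fin np) ℝ)
    (hM : M = (1 / γ) • fromBlocks A 0 D (C + τ • B))
    (hN : N = fromBlocks 0 Dᵀ 0 0 + ((1 - γ) / γ) • fromBlocks A 0 D (C + τ • B)) :
    ∀ μ ∈ spectrum ℂ ((M⁻¹ * N).map (algebraMap ℝ ℂ)),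
      ‖μ‖ ≤ max (1 - γ) (γ * ω - (1 - γ)) := by
  intro μ hμ
  have hCτ : (C + τ • B).PosDef := hC.add (hB.smul hτ)
  have hL : IsUnit (fromBlocks A 0 D (C + τ • B)).det := by
    rw [det_fromBlocks_zero₁₂, isUnit_iff_ne_zero]
    exact (mul_pos hA.det_pos hCτ.det_pos).ne'
  obtain ⟨θ, hμθ, x, hx, hKx⟩ := exists_pencil_eigenvector_of_mem_spectrum hγ0.ne' hL hM hN hμ
  obtain ⟨r, rfl, hr0, y, hy, hKy⟩ := saddlePencil_exists_real hA hCτ hx hKx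
  have hcoupτ : ∀ v q, q ⬝ᵥ D *ᵥ v ≤ √ω * mnorm A v * mnorm (C + τ • B) q := fun v q =>
    (hcoup v q).trans (mul_le_mul_of_nonneg_left (mnorm_le_mnorm_add_smul hB.posSemidef hτ.le q)
      (mul_nonneg (Real.sqrt_nonneg _) (Real.sqrt_nonneg _)))
  have hrω : -ω ≤ r := neg_le_saddlePencil_eigenvalue hA hCτ hω.le hcoupτ hy hKy
  rw [hμθ, show (γ : ℂ) * r + (1 - γ) = ((γ * r + (1 - γ) : ℝ) : ℂ) by push_cast; ring,
    Complex.norm_real, Real.norm_eq_abs, abs_le']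
  constructor
  · exact le_max_of_le_left (by nlinarith)
  · exact le_max_of_le_right (by nlinarith)

theorem stmt_3 {nu np : ℕ} (hnu : 0 < nu) (hnp : 0 < np)
    (A : Matrix (Fin nu) (Fin nu) ℝ)
    (B C : Matrix (Fin np) (Fin np) ℝ)
    (D : Matrix (Fin np) (Fin nu) ℝ) (τ ω γ : ℝ)
    (hτ : 0 < τ) (hω : 0 < ω) (hγ0 : 0 < γ) (hγ1 : γ ≤ 1)
    (hA : A.PosDef) (hB : B.PosDef) (hC : C.PosDef)
    (hcoup : ∀ (v : Fin nu → ℝ) (q : Fin np → ℝ),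
      q ⬝ᵥ D.mulVec v ≤ Real.sqrt ω * mnorm A v * mnorm C q)
    (M N : Matrix (Fin nu ⊕ Fin np) (Fin nu ⊕ Fin np) ℝ)
    (hM : M = (1 / γ) • fromBlocks A 0 D (C + τ • B))
    (hN : N = fromBlocks 0 Dᵀ 0 0 + ((1 - γ) / γ) • fromBlocks A 0 D (C + τ • B)) :
    ∀ μ ∈ spectrum ℂ ((M⁻¹ * N).map (algebraMap ℝ ℂ)),
      ‖μ‖ ≤ max (1 - γ) (γ * ω - (1 - γ)) :=
  stmt_3_general A B C D τ ω γ hτ hω hγ0 hA hB hC hcoup M N hM hN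
end

section
/- Let γ := 2/(2+ω) and define M := (1/γ)·[[A, 0],[D, C_τ]] and N := [[0, Dᵀ],[0, 0]] + ((1−γ)/γ)·[[A, 0],[D, C_τ]]. If qᵀDv ≤ √ω ‖v‖_A ‖q‖_C for all v, q, then the spectral radius of M⁻¹N satisfies ρ(M⁻¹N) ≤ ω/(ω+2), and ω/(ω+2) < 1. -/
/-!
With `K = [[A, 0], [D, C_τ]]` and `E = [[0, Dᵀ], [0, 0]]` we have `M = K / γ` and
`N = E + (1 - γ) / γ • K`, so every eigenvalue of `M⁻¹N` is `μ = 1 - γ + γ λ` for a generalized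
eigenvalue `E x = λ K x`. Writing `x = (v, q)`, either `λ = 0` or `C_τ q = -D v`; pairing the
first block row with `v̄` then gives `λ · v*Av = -q*C_τq`, so `λ` is real and `λ ≤ 0`. Applying the
coupling bound to the real and imaginary parts of `(v, q)` gives `q*C_τq ≤ ω · v*Av`, i.e. `λ ≥ -ω`.
Since `γ ω = 2 (1 - γ)`, this puts `μ` in `[-(1 - γ), 1 - γ]`, and `1 - γ = ω / (ω + 2)`.
-/

open Matrix

open scoped MatrixOrder
open Complex (re im)

lemma le_sq_of_le_mul_sqrt {t c : ℝ} (h : t ≤ c * √t) : t ≤ c ^ 2 := by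
  rcases le_or_gt t 0 with ht | ht
  · nlinarith
  · have hsqrt : √t ≤ c := by
      refine le_of_mul_le_mul_right ?_ (Real.sqrt_pos.2 ht)
      rwa [Real.mul_self_sqrt ht.le]
    calc t = √t ^ 2 := (Real.sq_sqrt ht.le).symm
      _ ≤ c ^ 2 := by gcongr

theorem dotProduct_mulVec_le_of_mulVec_eq_neg {m n : ℕ} {A : Matrix (Fin m) (Fin m) ℝ}
    {C C' : Matrix (Fin n) (Fin n) ℝ} {D : Matrix (Fin n) (Fin m) ℝ} {ω : ℝ} (hω : 0 ≤ ω)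
    (hA : A.PosSemidef) (hCC' : C ≤ C')
    (hcoup : ∀ v q, q ⬝ᵥ D *ᵥ v ≤ √ω * mnorm A v * mnorm C q)
    {v : Fin m → ℝ} {q : Fin n → ℝ} (h : C' *ᵥ q = -(D *ᵥ v)) :
    q ⬝ᵥ C' *ᵥ q ≤ ω * (v ⬝ᵥ A *ᵥ v) := by
  have hAv : 0 ≤ v ⬝ᵥ A *ᵥ v := by simpa using hA.dotProduct_mulVec_nonneg v
  have hmnorm_neg : mnorm A (-v) = mnorm A v := by simp [mnorm, mulVec_neg]
  have hle : q ⬝ᵥ C' *ᵥ q ≤ (√ω * mnorm A v) * √(q ⬝ᵥ C' *ᵥ q) :=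
    calc q ⬝ᵥ C' *ᵥ q = q ⬝ᵥ D *ᵥ (-v) := by rw [h, mulVec_neg]
      _ ≤ √ω * mnorm A v * mnorm C q := hmnorm_neg ▸ hcoup (-v) q
      _ ≤ (√ω * mnorm A v) * √(q ⬝ᵥ C' *ᵥ q) := by
        have hdiff := (Matrix.le_iff.1 hCC').dotProduct_mulVec_nonneg q
        rw [star_trivial, sub_mulVec, dotProduct_sub, sub_nonneg] at hdiff
        unfold mnorm
        gcongr
  calc q ⬝ᵥ C' *ᵥ q ≤ (√ω * mnorm A v) ^ 2 := le_sq_of_le_mul_sqrt hle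
    _ = ω * (v ⬝ᵥ A *ᵥ v) := by
      rw [mul_pow, mnorm, Real.sq_sqrt hAv, Real.sq_sqrt hω]

section RealMatrixOverComplex

variable {m n : Type*}

lemma conjTranspose_map_ofReal [Fintype m] (P : Matrix m n ℝ) :
    (P.map (algebraMap ℝ ℂ))ᴴ = Pᵀ.map (algebraMap ℝ ℂ) := by
  ext i j
  simp

lemma re_comp_ne_zero_or_im_comp_ne_zero {z : n → ℂ} (hz : z ≠ 0) :
    re ∘ z ≠ 0 ∨ im ∘ z ≠ 0 := by
  contrapose! hz
  funext i
  exact Complex.ext (congrFun hz.1 i) (congrFun hz.2 i)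

variable [Fintype n]

lemma re_comp_map_ofReal_mulVec (P : Matrix m n ℝ) (z : n → ℂ) :
    re ∘ (P.map (algebraMap ℝ ℂ) *ᵥ z) = P *ᵥ (re ∘ z) := by
  ext i
  simp [mulVec, dotProduct, Complex.re_sum]

lemma im_comp_map_ofReal_mulVec (P : Matrix m n ℝ) (z : n → ℂ) :
    im ∘ (P.map (algebraMap ℝ ℂ) *ᵥ z) = P *ᵥ (im ∘ z) := by
  ext i
  simp [mulVec, dotProduct, Complex.im_sum]

lemma star_dotProduct_map_ofReal_mulVec_self {S : Matrix n n ℝ} (hS : S.IsSymm) (z : n → ℂ) :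
    star z ⬝ᵥ S.map (algebraMap ℝ ℂ) *ᵥ z =
      ((re ∘ z) ⬝ᵥ S *ᵥ (re ∘ z) + (im ∘ z) ⬝ᵥ S *ᵥ (im ∘ z) : ℝ) := by
  apply Complex.ext
  · simp [mulVec, dotProduct, Complex.re_sum, Finset.mul_sum, ← Finset.sum_add_distrib]
  · simp only [dotProduct, Pi.star_apply, RCLike.star_def, mulVec, Complex.coe_algebraMap,
      map_apply, Finset.mul_sum, Complex.im_sum, Complex.mul_im, Complex.conj_re, Complex.ofReal_re,
      Complex.ofReal_im, zero_mul, add_zero, Complex.conj_im, Complex.mul_re, sub_zero, neg_mul,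
      Function.comp_apply, ← Finset.sum_add_distrib, Complex.ofReal_sum, Complex.ofReal_add,
      Complex.ofReal_mul, Complex.add_im, mul_zero, Finset.sum_const_zero]
    simp only [Finset.sum_add_distrib, Finset.sum_neg_distrib, add_neg_eq_zero]
    rw [Finset.sum_comm]
    refine Finset.sum_congr rfl fun i _ => Finset.sum_congr rfl fun j _ => ?_
    rw [hS.apply i j]
    ring

lemma star_mulVec_dotProduct (P : Matrix m n ℂ) [Fintype m] (v : n → ℂ) (q : m → ℂ) :
    star (P *ᵥ v) ⬝ᵥ q = star v ⬝ᵥ Pᴴ *ᵥ q := by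
  rw [star_mulVec, dotProduct_mulVec]

end RealMatrixOverComplex

lemma Matrix.PosDef.dotProduct_re_add_dotProduct_im_pos {n : Type*} [Fintype n]
    {S : Matrix n n ℝ} (hS : S.PosDef) {z : n → ℂ} (hz : z ≠ 0) :
    0 < (re ∘ z) ⬝ᵥ S *ᵥ (re ∘ z) + (im ∘ z) ⬝ᵥ S *ᵥ (im ∘ z) := by
  have hre := hS.posSemidef.dotProduct_mulVec_nonneg (re ∘ z)
  have him := hS.posSemidef.dotProduct_mulVec_nonneg (im ∘ z)
  simp only [star_trivial] at hre him
  rcases re_comp_ne_zero_or_im_comp_ne_zero hz with h | h <;>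
  · have hpos := hS.dotProduct_mulVec_pos h
    simp only [star_trivial] at hpos
    linarith

section SaddlePointPencil

variable {m n : ℕ} {A : Matrix (Fin m) (Fin m) ℝ} {C C' : Matrix (Fin n) (Fin n) ℝ}
  {D : Matrix (Fin n) (Fin m) ℝ} {ω : ℝ}

theorem exists_real_mem_Icc_of_mulVec_eq (hω : 0 ≤ ω) (hA : A.PosDef) (hC' : C'.PosDef)
    (hCC' : C ≤ C')
    (hcoup : ∀ v q, q ⬝ᵥ D *ᵥ v ≤ √ω * mnorm A v * mnorm C q)
    {c : ℂ} {v : Fin m → ℂ} {q : Fin n → ℂ} (hvq : v ≠ 0 ∨ q ≠ 0)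
    (h₁ : Dᵀ.map (algebraMap ℝ ℂ) *ᵥ q = c • A.map (algebraMap ℝ ℂ) *ᵥ v)
    (h₂ : C'.map (algebraMap ℝ ℂ) *ᵥ q = -(D.map (algebraMap ℝ ℂ) *ᵥ v)) :
    ∃ r : ℝ, c = r ∧ r ∈ Set.Icc (-ω) 0 := by
  have hv : v ≠ 0 := by
    rintro rfl
    refine hvq.resolve_left (not_not.2 rfl)
      (eq_zero_of_mulVec_eq_zero (M := C'.map (algebraMap ℝ ℂ)) ?_ ?_)
    · rw [← RingHom.mapMatrix_apply, ← RingHom.map_det]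
      exact (map_ne_zero _).2 hC'.det_pos.ne'
    · simpa using h₂
  have hre : C' *ᵥ (re ∘ q) = -(D *ᵥ (re ∘ v)) := by
    rw [← re_comp_map_ofReal_mulVec, ← re_comp_map_ofReal_mulVec, h₂]
    rfl
  have him : C' *ᵥ (im ∘ q) = -(D *ᵥ (im ∘ v)) := by
    rw [← im_comp_map_ofReal_mulVec, ← im_comp_map_ofReal_mulVec, h₂]
    rfl
  set a := (re ∘ v) ⬝ᵥ A *ᵥ (re ∘ v) + (im ∘ v) ⬝ᵥ A *ᵥ (im ∘ v)
  set t := (re ∘ q) ⬝ᵥ C' *ᵥ (re ∘ q) + (im ∘ q) ⬝ᵥ C' *ᵥ (im ∘ q)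
  have ha : 0 < a := hA.dotProduct_re_add_dotProduct_im_pos hv
  have ht : 0 ≤ t := add_nonneg (by simpa using hC'.posSemidef.dotProduct_mulVec_nonneg _)
    (by simpa using hC'.posSemidef.dotProduct_mulVec_nonneg _)
  have htω : t ≤ ω * a := by
    rw [mul_add]
    exact add_le_add (dotProduct_mulVec_le_of_mulVec_eq_neg hω hA.posSemidef hCC' hcoup hre)
      (dotProduct_mulVec_le_of_mulVec_eq_neg hω hA.posSemidef hCC' hcoup him)
  have hca : c * a = -t := by
    calc c * a = star v ⬝ᵥ c • A.map (algebraMap ℝ ℂ) *ᵥ v := by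
          rw [dotProduct_smul, star_dotProduct_map_ofReal_mulVec_self
            (isHermitian_iff_isSymm.1 hA.isHermitian), smul_eq_mul]
      _ = star (D.map (algebraMap ℝ ℂ) *ᵥ v) ⬝ᵥ q := by
          rw [← h₁, star_mulVec_dotProduct, conjTranspose_map_ofReal]
      _ = -(star (C'.map (algebraMap ℝ ℂ) *ᵥ q) ⬝ᵥ q) := by
          rw [h₂, star_neg, neg_dotProduct, neg_neg]
      _ = -t := by
          rw [star_mulVec_dotProduct, conjTranspose_map_ofReal,
            (isHermitian_iff_isSymm.1 hC'.isHermitian).eq,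
            star_dotProduct_map_ofReal_mulVec_self (isHermitian_iff_isSymm.1 hC'.isHermitian)]
  refine ⟨-t / a, ?_, ?_, ?_⟩
  · push_cast
    rw [eq_div_iff (by exact_mod_cast ha.ne'), hca]
  · rw [neg_div, neg_le_neg_iff, div_le_iff₀ ha]
    exact htω
  · exact div_nonpos_of_nonpos_of_nonneg (neg_nonpos.2 ht) ha.le

theorem exists_real_mem_Icc_of_fromBlocks_mulVec_eq (hω : 0 ≤ ω) (hA : A.PosDef)
    (hC' : C'.PosDef) (hCC' : C ≤ C')
    (hcoup : ∀ v q, q ⬝ᵥ D *ᵥ v ≤ √ω * mnorm A v * mnorm C q)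
    {c : ℂ} {x : Fin m ⊕ Fin n → ℂ} (hx : x ≠ 0)
    (h : (fromBlocks 0 Dᵀ 0 0 : Matrix (Fin m ⊕ Fin n) (Fin m ⊕ Fin n) ℝ).map (algebraMap ℝ ℂ)
        *ᵥ x =
      c • (fromBlocks A 0 D C').map (algebraMap ℝ ℂ) *ᵥ x) :
    ∃ r : ℝ, c = r ∧ r ∈ Set.Icc (-ω) 0 := by
  rcases eq_or_ne c 0 with rfl | hc
  · exact ⟨0, by simp, by simpa using hω, le_rfl⟩
  simp only [fromBlocks_map, Matrix.map_zero _ (map_zero _), fromBlocks_mulVec] at h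
  have h₁ : Dᵀ.map (algebraMap ℝ ℂ) *ᵥ (x ∘ Sum.inr) =
      c • A.map (algebraMap ℝ ℂ) *ᵥ (x ∘ Sum.inl) :=
    funext fun i => by simpa using congrFun h (Sum.inl i)
  have h₂ : c • (D.map (algebraMap ℝ ℂ) *ᵥ (x ∘ Sum.inl) +
      C'.map (algebraMap ℝ ℂ) *ᵥ (x ∘ Sum.inr)) = 0 :=
    funext fun i => by simpa using (congrFun h (Sum.inr i)).symm
  have hvq : x ∘ Sum.inl ≠ 0 ∨ x ∘ Sum.inr ≠ 0 := by
    contrapose! hx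
    funext s
    cases s with
    | inl i => exact congrFun hx.1 i
    | inr i => exact congrFun hx.2 i
  exact exists_real_mem_Icc_of_mulVec_eq hω hA hC' hCC' hcoup hvq h₁
    (eq_neg_of_add_eq_zero_right ((smul_eq_zero.1 h₂).resolve_left hc))

end SaddlePointPencil

theorem Matrix.exists_mulVec_eq_smul_mulVec_of_mem_spectrum_inv_mul {n K L : Type*} [Fintype n]
    [DecidableEq n] [Field K] [Field L] [Algebra K L] {M N : Matrix n n K} (hM : IsUnit M.det)
    {μ : L} (hμ : μ ∈ spectrum L ((M⁻¹ * N).map (algebraMap K L))) :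
    ∃ x ≠ 0, N.map (algebraMap K L) *ᵥ x = μ • M.map (algebraMap K L) *ᵥ x := by
  rw [spectrum.mem_iff, Algebra.algebraMap_eq_smul_one, isUnit_iff_isUnit_det, isUnit_iff_ne_zero,
    not_not, ← exists_mulVec_eq_zero_iff] at hμ
  obtain ⟨x, hx, hxμ⟩ := hμ
  rw [sub_mulVec, smul_mulVec, one_mulVec, sub_eq_zero] at hxμ
  refine ⟨x, hx, ?_⟩
  calc N.map (algebraMap K L) *ᵥ x
      = M.map (algebraMap K L) *ᵥ (M⁻¹ * N).map (algebraMap K L) *ᵥ x := by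
        rw [mulVec_mulVec, ← Matrix.map_mul, ← mul_assoc, mul_nonsing_inv _ hM, one_mul]
    _ = μ • M.map (algebraMap K L) *ᵥ x := by rw [← hxμ, mulVec_smul]

lemma mulVec_eq_smul_mulVec_of_relaxation {ι : Type*} [Fintype ι] {E K : Matrix ι ι ℝ}
    {γ : ℝ} {μ : ℂ} {x : ι → ℂ}
    (h : (E + ((1 - γ) / γ) • K).map (algebraMap ℝ ℂ) *ᵥ x =
      μ • ((1 / γ) • K).map (algebraMap ℝ ℂ) *ᵥ x) :
    E.map (algebraMap ℝ ℂ) *ᵥ x =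
      ((μ - (1 - γ : ℝ)) / (γ : ℝ)) • K.map (algebraMap ℝ ℂ) *ᵥ x := by
  have hK (s : ℝ) : (s • K).map (algebraMap ℝ ℂ) = (s : ℂ) • K.map (algebraMap ℝ ℂ) := by
    ext; simp
  rw [Matrix.map_add _ (map_add _), hK, hK, add_mulVec, smul_mulVec, smul_mulVec] at h
  linear_combination (norm := module) h

theorem stmt_4_general {nu np : ℕ}
    (A : Matrix (Fin nu) (Fin nu) ℝ)
    (B C : Matrix (Fin np) (Fin np) ℝ)
    (D : Matrix (Fin np) (Fin nu) ℝ) (τ ω γ : ℝ)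
    (hτ : 0 < τ) (hω : 0 < ω) (hγ : γ = 2 / (2 + ω))
    (hA : A.PosDef) (hB : B.PosDef) (hC : C.PosDef)
    (hcoup : ∀ (v : Fin nu → ℝ) (q : Fin np → ℝ),
      q ⬝ᵥ D.mulVec v ≤ Real.sqrt ω * mnorm A v * mnorm C q)
    (M N : Matrix (Fin nu ⊕ Fin np) (Fin nu ⊕ Fin np) ℝ)
    (hM : M = (1 / γ) • fromBlocks A 0 D (C + τ • B))
    (hN : N = fromBlocks 0 Dᵀ 0 0 + ((1 - γ) / γ) • fromBlocks A 0 D (C + τ • B)) :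
    (∀ μ ∈ spectrum ℂ ((M⁻¹ * N).map (algebraMap ℝ ℂ)), ‖μ‖ ≤ ω / (ω + 2)) ∧
      ω / (ω + 2) < 1 := by
  subst hM hN
  have hγ0 : 0 < γ := by rw [hγ]; positivity
  have hγω : γ * ω = 2 * (1 - γ) := by rw [hγ]; field_simp; ring
  have hρ : ω / (ω + 2) = 1 - γ := by rw [hγ]; field_simp; ring
  refine ⟨fun μ hμ => ?_, by rw [div_lt_one (by positivity)]; linarith⟩
  have hτB : (τ • B).PosSemidef := hB.posSemidef.smul hτ.le
  have hC' : (C + τ • B).PosDef := hC.add_posSemidef hτB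
  have hMdet : IsUnit ((1 / γ) • fromBlocks A 0 D (C + τ • B)).det := by
    rw [det_smul, det_fromBlocks_zero₁₂, isUnit_iff_ne_zero]
    exact mul_ne_zero (by positivity) (mul_pos hA.det_pos hC'.det_pos).ne'
  obtain ⟨x, hx, hNM⟩ := exists_mulVec_eq_smul_mulVec_of_mem_spectrum_inv_mul hMdet hμ
  obtain ⟨r, hr, hrω, hr0⟩ := exists_real_mem_Icc_of_fromBlocks_mulVec_eq hω.le hA hC'
    (le_add_of_nonneg_right (nonneg_iff_posSemidef.2 hτB)) hcoup hx
    (mulVec_eq_smul_mulVec_of_relaxation hNM)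
  have hμr : μ = ((1 - γ + γ * r : ℝ) : ℂ) := by
    rw [div_eq_iff (by exact_mod_cast hγ0.ne')] at hr
    push_cast at hr ⊢
    linear_combination hr
  rw [hμr, Complex.norm_real, Real.norm_eq_abs, hρ, abs_le]
  constructor <;> nlinarith

theorem stmt_4 {nu np : ℕ} (hnu : 0 < nu) (hnp : 0 < np)
    (A : Matrix (Fin nu) (Fin nu) ℝ)
    (B C : Matrix (Fin np) (Fin np) ℝ)
    (D : Matrix (Fin np) (Fin nu) ℝ) (τ ω γ : ℝ)
    (hτ : 0 < τ) (hω : 0 < ω) (hγ : γ = 2 / (2 + ω))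
    (hA : A.PosDef) (hB : B.PosDef) (hC : C.PosDef)
    (hcoup : ∀ (v : Fin nu → ℝ) (q : Fin np → ℝ),
      q ⬝ᵥ D.mulVec v ≤ Real.sqrt ω * mnorm A v * mnorm C q)
    (M N : Matrix (Fin nu ⊕ Fin np) (Fin nu ⊕ Fin np) ℝ)
    (hM : M = (1 / γ) • fromBlocks A 0 D (C + τ • B))
    (hN : N = fromBlocks 0 Dᵀ 0 0 + ((1 - γ) / γ) • fromBlocks A 0 D (C + τ • B)) :
    (∀ μ ∈ spectrum ℂ ((M⁻¹ * N).map (algebraMap ℝ ℂ)), ‖μ‖ ≤ ω / (ω + 2)) ∧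
      ω / (ω + 2) < 1 :=
  stmt_4_general A B C D τ ω γ hτ hω hγ hA hB hC hcoup M N hM hN
end

section
/- Let γ := 2/(2+ω) and S := (1−γ)·I − γ·C_τ⁻¹ D A⁻¹ Dᵀ, where I is the n_p×n_p identity matrix. If qᵀDv ≤ √ω ‖v‖_A ‖q‖_C for all v, q, then ‖S x‖_{C_τ} ≤ (1−γ)·‖x‖_{C_τ} = (ω/(2+ω))·‖x‖_{C_τ} for every x ∈ ℝ^{n_p}. -/
/-!
Write `M = C + τ B` and `E = D A⁻¹ Dᵀ`. The coupling bound, applied to `v = A⁻¹ Dᵀ q`, gives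
`E ≤ ω C ≤ ω M` as quadratic forms. For `y = M⁻¹ E x` one has `‖y‖²_M = yᵀ E x`, and Cauchy–Schwarz
for `E` turns `E ≤ ω M` into `yᵀ E x ≤ ω xᵀ E x`. Since `S x = (1 - γ) x - γ y`,
`‖S x‖²_M = (1 - γ)² ‖x‖²_M - 2 γ (1 - γ) xᵀ E x + γ² ‖y‖²_M`, and the last two terms have a
nonpositive sum as soon as `γ ω ≤ 2 (1 - γ)`, which `γ = 2 / (2 + ω)` satisfies with equality.
-/

open Matrix

lemma le_sq_of_le_sqrt_mul {e t : ℝ} (he : 0 ≤ e) (h : e ≤ √e * t) : e ≤ t ^ 2 := by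
  have hs := Real.sq_sqrt he
  nlinarith [sq_nonneg (√e - t), Real.sqrt_nonneg e]

namespace Matrix

variable {n m : Type*} [Fintype n] [Fintype m]

lemma IsHermitian.dotProduct_mulVec_comm {M : Matrix n n ℝ} (hM : M.IsHermitian) (x y : n → ℝ) :
    x ⬝ᵥ M *ᵥ y = y ⬝ᵥ M *ᵥ x := by
  rw [dotProduct_mulVec, ← mulVec_transpose, ← conjTranspose_eq_transpose_of_trivial, hM.eq,
    dotProduct_comm]

lemma PosSemidef.dotProduct_mulVec_sq_le {M : Matrix n n ℝ} (hM : M.PosSemidef) (x y : n → ℝ) :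
    (x ⬝ᵥ M *ᵥ y) ^ 2 ≤ (x ⬝ᵥ M *ᵥ x) * (y ⬝ᵥ M *ᵥ y) := by
  let _ := M.toSeminormedAddCommGroup hM
  let _ := M.toInnerProductSpace hM
  have cauchySchwarz := real_inner_mul_inner_self_le x y
  change (M *ᵥ y) ⬝ᵥ star x * ((M *ᵥ y) ⬝ᵥ star x) ≤
    (M *ᵥ x) ⬝ᵥ star x * ((M *ᵥ y) ⬝ᵥ star y) at cauchySchwarz
  simpa only [star_trivial, dotProduct_comm _ x, dotProduct_comm _ y, sq] using cauchySchwarz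

lemma PosSemidef.dotProduct_mulVec_le_add {M N : Matrix n n ℝ} (hN : N.PosSemidef) (x : n → ℝ) :
    x ⬝ᵥ M *ᵥ x ≤ x ⬝ᵥ (M + N) *ᵥ x := by
  rw [add_mulVec, dotProduct_add]
  simpa using hN.dotProduct_mulVec_nonneg x

lemma dotProduct_mul_inv_mul_transpose_mulVec_le [DecidableEq m] {A : Matrix m m ℝ}
    (hA : A.PosDef) {C : Matrix n n ℝ} (hC : C.PosSemidef) (D : Matrix n m ℝ) {κ : ℝ}
    (hcoup : ∀ v q, q ⬝ᵥ D *ᵥ v ≤ κ * √(v ⬝ᵥ A *ᵥ v) * √(q ⬝ᵥ C *ᵥ q)) (z : n → ℝ) :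
    z ⬝ᵥ (D * A⁻¹ * Dᵀ) *ᵥ z ≤ κ ^ 2 * (z ⬝ᵥ C *ᵥ z) := by
  set v := A⁻¹ *ᵥ Dᵀ *ᵥ z
  have hDv : (D * A⁻¹ * Dᵀ) *ᵥ z = D *ᵥ v := by simp only [v, mulVec_mulVec, Matrix.mul_assoc]
  have hAv : v ⬝ᵥ A *ᵥ v = z ⬝ᵥ D *ᵥ v := by
    rw [mulVec_mulVec, mul_nonsing_inv _ hA.det_pos.ne'.isUnit, one_mulVec, dotProduct_mulVec,
      vecMul_transpose, dotProduct_comm]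
  have hv := hA.posSemidef.dotProduct_mulVec_nonneg v
  have hz := hC.dotProduct_mulVec_nonneg z
  simp only [star_trivial] at hv hz
  rw [hDv, ← Real.sq_sqrt hz, ← mul_pow]
  refine le_sq_of_le_sqrt_mul (hAv ▸ hv) ?_
  simpa [hAv, mul_comm, mul_assoc, mul_left_comm] using hcoup v z

lemma dotProduct_inv_mul_mulVec_le [DecidableEq n] {M E : Matrix n n ℝ} (hM : M.PosDef)
    (hE : E.PosSemidef) {ω : ℝ} (hω : 0 ≤ ω) (hEM : ∀ z, z ⬝ᵥ E *ᵥ z ≤ ω * (z ⬝ᵥ M *ᵥ z))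
    (x : n → ℝ) :
    (M⁻¹ *ᵥ E *ᵥ x) ⬝ᵥ E *ᵥ x ≤ ω * (x ⬝ᵥ E *ᵥ x) := by
  set y := M⁻¹ *ᵥ E *ᵥ x
  have hMy : M *ᵥ y = E *ᵥ x := by
    rw [mulVec_mulVec, mul_nonsing_inv _ hM.det_pos.ne'.isUnit, one_mulVec]
  have hy := hM.posSemidef.dotProduct_mulVec_nonneg y
  have hx := hE.dotProduct_mulVec_nonneg x
  simp only [star_trivial, hMy] at hy hx
  rcases hy.eq_or_lt with hzero | hpos
  · rw [← hzero]
    positivity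
  · have hyy : y ⬝ᵥ E *ᵥ y ≤ ω * (y ⬝ᵥ E *ᵥ x) := hMy ▸ hEM y
    have cauchySchwarz := hE.dotProduct_mulVec_sq_le y x
    refine le_of_mul_le_mul_left ?_ hpos
    nlinarith [mul_le_mul_of_nonneg_right hyy hx]

lemma dotProduct_mulVec_damped_le [DecidableEq n] {M E : Matrix n n ℝ} (hM : M.PosDef)
    (hE : E.PosSemidef) {ω γ : ℝ} (hω : 0 ≤ ω) (hγ : 0 ≤ γ) (hγω : γ * ω ≤ 2 * (1 - γ))
    (hEM : ∀ z, z ⬝ᵥ E *ᵥ z ≤ ω * (z ⬝ᵥ M *ᵥ z)) (x : n → ℝ) :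
    (((1 - γ) • 1 - γ • (M⁻¹ * E)) *ᵥ x) ⬝ᵥ M *ᵥ (((1 - γ) • 1 - γ • (M⁻¹ * E)) *ᵥ x) ≤
      (1 - γ) ^ 2 * (x ⬝ᵥ M *ᵥ x) := by
  set y := M⁻¹ *ᵥ E *ᵥ x
  have hMy : M *ᵥ y = E *ᵥ x := by
    rw [mulVec_mulVec, mul_nonsing_inv _ hM.det_pos.ne'.isUnit, one_mulVec]
  have hyx : y ⬝ᵥ M *ᵥ x = x ⬝ᵥ E *ᵥ x := by
    rw [hM.isHermitian.dotProduct_mulVec_comm, hMy]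
  have hyEx : y ⬝ᵥ E *ᵥ x ≤ ω * (x ⬝ᵥ E *ᵥ x) := dotProduct_inv_mul_mulVec_le hM hE hω hEM x
  have hx := hE.dotProduct_mulVec_nonneg x
  simp only [star_trivial] at hx
  have hcross : γ * (γ * ω) * (x ⬝ᵥ E *ᵥ x) ≤ γ * (2 * (1 - γ)) * (x ⬝ᵥ E *ᵥ x) := by gcongr
  have hSx : ((1 - γ) • 1 - γ • (M⁻¹ * E)) *ᵥ x = (1 - γ) • x - γ • y := by
    simp only [sub_mulVec, smul_mulVec, one_mulVec, ← mulVec_mulVec, y]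
  simp only [hSx, mulVec_sub, mulVec_smul, dotProduct_sub, sub_dotProduct, smul_dotProduct,
    dotProduct_smul, smul_eq_mul, hyx, hMy]
  nlinarith [mul_le_mul_of_nonneg_left hyEx (sq_nonneg γ)]

end Matrix

lemma mnorm_le_mul_of_dotProduct_le {n : ℕ} {M : Matrix (Fin n) (Fin n) ℝ} {x y : Fin n → ℝ}
    {c : ℝ} (hc : 0 ≤ c) (h : y ⬝ᵥ M *ᵥ y ≤ c ^ 2 * (x ⬝ᵥ M *ᵥ x)) :
    mnorm M y ≤ c * mnorm M x := by
  rw [mnorm, mnorm, ← Real.sqrt_sq hc, ← Real.sqrt_mul (sq_nonneg c)]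
  exact Real.sqrt_le_sqrt h

theorem stmt_6_general {nu np : ℕ}
    (A : Matrix (Fin nu) (Fin nu) ℝ)
    (B C : Matrix (Fin np) (Fin np) ℝ)
    (D : Matrix (Fin np) (Fin nu) ℝ) (τ ω γ : ℝ)
    (hτ : 0 < τ) (hω : 0 < ω) (hγ : γ = 2 / (2 + ω))
    (hA : A.PosDef) (hB : B.PosDef) (hC : C.PosDef)
    (hcoup : ∀ (v : Fin nu → ℝ) (q : Fin np → ℝ),
      q ⬝ᵥ D.mulVec v ≤ Real.sqrt ω * mnorm A v * mnorm C q)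
    (S : Matrix (Fin np) (Fin np) ℝ)
    (hS : S = (1 - γ) • (1 : Matrix (Fin np) (Fin np) ℝ)
        - γ • ((C + τ • B)⁻¹ * D * A⁻¹ * Dᵀ)) :
    ∀ x : Fin np → ℝ,
      mnorm (C + τ • B) (S.mulVec x) ≤ (1 - γ) * mnorm (C + τ • B) x ∧
        (1 - γ) * mnorm (C + τ • B) x = (ω / (2 + ω)) * mnorm (C + τ • B) x := by
  intro x
  have h1γ : 1 - γ = ω / (2 + ω) := by rw [hγ]; field_simp; ring
  have hγω : γ * ω = 2 * (1 - γ) := by rw [h1γ, hγ]; field_simp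
  have hτB : (τ • B).PosSemidef := hB.posSemidef.smul hτ.le
  have hE : (D * A⁻¹ * Dᵀ).PosSemidef := by
    simpa using hA.inv.posSemidef.mul_mul_conjTranspose_same D
  have hEC (z : Fin np → ℝ) : z ⬝ᵥ (D * A⁻¹ * Dᵀ) *ᵥ z ≤ ω * (z ⬝ᵥ (C + τ • B) *ᵥ z) := by
    have hEz := dotProduct_mul_inv_mul_transpose_mulVec_le hA hC.posSemidef D hcoup z
    rw [Real.sq_sqrt hω.le] at hEz
    exact hEz.trans (mul_le_mul_of_nonneg_left (hτB.dotProduct_mulVec_le_add z) hω.le)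
  have hSx := dotProduct_mulVec_damped_le (hC.add_posSemidef hτB) hE hω.le (by rw [hγ]; positivity)
    hγω.le hEC x
  simp only [Matrix.mul_assoc] at hS hSx
  refine ⟨?_, by rw [h1γ]⟩
  exact hS ▸ mnorm_le_mul_of_dotProduct_le (by rw [h1γ]; positivity) hSx

theorem stmt_6 {nu np : ℕ} (hnu : 0 < nu) (hnp : 0 < np)
    (A : Matrix (Fin nu) (Fin nu) ℝ)
    (B C : Matrix (Fin np) (Fin np) ℝ)
    (D : Matrix (Fin np) (Fin nu) ℝ) (τ ω γ : ℝ)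
    (hτ : 0 < τ) (hω : 0 < ω) (hγ : γ = 2 / (2 + ω))
    (hA : A.PosDef) (hB : B.PosDef) (hC : C.PosDef)
    (hcoup : ∀ (v : Fin nu → ℝ) (q : Fin np → ℝ),
      q ⬝ᵥ D.mulVec v ≤ Real.sqrt ω * mnorm A v * mnorm C q)
    (S : Matrix (Fin np) (Fin np) ℝ)
    (hS : S = (1 - γ) • (1 : Matrix (Fin np) (Fin np) ℝ)
        - γ • ((C + τ • B)⁻¹ * D * A⁻¹ * Dᵀ)) :
    ∀ x : Fin np → ℝ,
      mnorm (C + τ • B) (S.mulVec x) ≤ (1 - γ) * mnorm (C + τ • B) x ∧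
        (1 - γ) * mnorm (C + τ • B) x = (ω / (2 + ω)) * mnorm (C + τ • B) x :=
  stmt_6_general A B C D τ ω γ hτ hω hγ hA hB hC hcoup S hS
end

section
/- Let γ ∈ (0,1], K ≥ 1 a natural number, and S an n_p×n_p real matrix satisfying ‖S x‖_{C_τ} ≤ (1−γ)·‖x‖_{C_τ} for all x ∈ ℝ^{n_p}. Then the matrix S̃ := S^{K−1} + γ·∑_{k=0}^{K−2} S^k satisfies ‖S̃ x‖_{C_τ} ≤ ‖x‖_{C_τ} for every x ∈ ℝ^{n_p}. -/
/-!
Since `C + τB` is positive semidefinite, `x ↦ ‖x‖_{C+τB}` is a seminorm, so the triangle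
inequality and `‖Sᵏx‖ ≤ (1-γ)ᵏ‖x‖` bound `‖S̃x‖` by `((1-γ)^(K-1) + γ ∑_{k<K-1} (1-γ)ᵏ)‖x‖`,
and this geometric weight telescopes to exactly `1`.
-/

open Matrix

open Finset

namespace Seminorm

variable {E : Type*} [AddCommGroup E] [Module ℝ E] (p : Seminorm ℝ E) {f : Module.End ℝ E}

theorem apply_pow_apply_le {q : ℝ} (hq : 0 ≤ q) (hf : ∀ x, p (f x) ≤ q * p x) (k : ℕ) (x : E) :
    p ((f ^ k) x) ≤ q ^ k * p x := by
  induction k generalizing x with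
  | zero => simp
  | succ k ih =>
    calc p ((f ^ (k + 1)) x) = p (f ((f ^ k) x)) := by rw [pow_succ', Module.End.mul_apply]
      _ ≤ q * (q ^ k * p x) := (hf _).trans (mul_le_mul_of_nonneg_left (ih x) hq)
      _ = q ^ (k + 1) * p x := by ring

theorem apply_pow_add_smul_geom_sum_le {γ : ℝ} (hγ0 : 0 ≤ γ) (hγ1 : γ ≤ 1)
    (hf : ∀ x, p (f x) ≤ (1 - γ) * p x) (m : ℕ) (x : E) :
    p ((f ^ m + γ • ∑ k ∈ range m, f ^ k) x) ≤ p x := by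
  have hpow := p.apply_pow_apply_le (sub_nonneg.2 hγ1) hf
  have hweights : (1 - γ) ^ m + γ * ∑ k ∈ range m, (1 - γ) ^ k = 1 := by
    have := mul_neg_geom_sum (1 - γ) m
    rw [sub_sub_cancel] at this
    linarith
  calc p ((f ^ m + γ • ∑ k ∈ range m, f ^ k) x)
      ≤ p ((f ^ m) x) + γ * ∑ k ∈ range m, p ((f ^ k) x) := by
        rw [LinearMap.add_apply, LinearMap.smul_apply, LinearMap.sum_apply]
        refine (map_add_le_add p _ _).trans (add_le_add le_rfl ?_)
        rw [map_smul_eq_mul, Real.norm_of_nonneg hγ0]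
        exact mul_le_mul_of_nonneg_left
          (le_sum_of_subadditive p (map_zero p).le (map_add_le_add p) _ _) hγ0
    _ ≤ (1 - γ) ^ m * p x + γ * ∑ k ∈ range m, (1 - γ) ^ k * p x := by
        gcongr with k
        · exact hpow m x
        · exact hpow k x
    _ = p x := by rw [← sum_mul]; linear_combination p x * hweights

end Seminorm

noncomputable def Matrix.PosSemidef.seminorm {n : Type*} [Fintype n] {M : Matrix n n ℝ}
    (hM : M.PosSemidef) : Seminorm ℝ (n → ℝ) :=
  letI := M.toSeminormedAddCommGroup hM
  letI := M.toInnerProductSpace hM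
  normSeminorm ℝ (n → ℝ)

theorem Matrix.PosSemidef.seminorm_apply_eq_mnorm {n : ℕ} {M : Matrix (Fin n) (Fin n) ℝ}
    (hM : M.PosSemidef) (x : Fin n → ℝ) : hM.seminorm x = mnorm M x := by
  show Real.sqrt ((M *ᵥ x) ⬝ᵥ star x) = Real.sqrt (x ⬝ᵥ M *ᵥ x)
  rw [dotProduct_comm, star_trivial]

theorem stmt_7_general {np : ℕ}
    (B C : Matrix (Fin np) (Fin np) ℝ) (τ γ : ℝ) (K : ℕ)
    (hτ : 0 < τ) (hγ0 : 0 < γ) (hγ1 : γ ≤ 1)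
    (hB : B.PosDef) (hC : C.PosDef)
    (S : Matrix (Fin np) (Fin np) ℝ)
    (hS : ∀ x : Fin np → ℝ,
      mnorm (C + τ • B) (S.mulVec x) ≤ (1 - γ) * mnorm (C + τ • B) x) :
    ∀ x : Fin np → ℝ,
      mnorm (C + τ • B)
        ((S ^ (K - 1) + γ • ∑ k ∈ Finset.range (K - 1), S ^ k).mulVec x)
        ≤ mnorm (C + τ • B) x := by
  intro x
  have hM : (C + τ • B).PosSemidef := hC.posSemidef.add (hB.posSemidef.smul hτ.le)
  have hS' : ∀ y, hM.seminorm (toLin' S y) ≤ (1 - γ) * hM.seminorm y := by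
    simpa only [hM.seminorm_apply_eq_mnorm, toLin'_apply] using hS
  have key := hM.seminorm.apply_pow_add_smul_geom_sum_le hγ0.le hγ1 hS' (K - 1) x
  simpa only [hM.seminorm_apply_eq_mnorm, ← toLin'_apply, map_add, map_smul, map_sum,
    toLin'_pow] using key

theorem stmt_7 {np : ℕ} (hnp : 0 < np)
    (B C : Matrix (Fin np) (Fin np) ℝ) (τ γ : ℝ) (K : ℕ)
    (hτ : 0 < τ) (hγ0 : 0 < γ) (hγ1 : γ ≤ 1) (hK : 1 ≤ K)
    (hB : B.PosDef) (hC : C.PosDef)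
    (S : Matrix (Fin np) (Fin np) ℝ)
    (hS : ∀ x : Fin np → ℝ,
      mnorm (C + τ • B) (S.mulVec x) ≤ (1 - γ) * mnorm (C + τ • B) x) :
    ∀ x : Fin np → ℝ,
      mnorm (C + τ • B)
        ((S ^ (K - 1) + γ • ∑ k ∈ Finset.range (K - 1), S ^ k).mulVec x)
        ≤ mnorm (C + τ • B) x :=
  stmt_7_general B C τ γ K hτ hγ0 hγ1 hB hC S hS
end

section
/- Let T be an n×n real matrix, γ a real number, r ∈ ℝⁿ, and S := γ·T + (1−γ)·I. Suppose sequences (p̂_k)_{k≥1} and (p_k)_{k≥0} in ℝⁿ satisfy p̂_k = T·p_{k−1} + r for all k ≥ 1 and p_k = γ·p̂_k + (1−γ)·p_{k−1} for all k ≥ 1. Then for every k ≥ 0 one has p̂_{k+1} − p_k = S^k·(p̂_1 − p_0). -/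
open Matrix

section

variable {ι R : Type*} [Fintype ι] [DecidableEq ι] [CommRing R]

theorem eq_pow_mulVec_of_succ_eq_mulVec (A : Matrix ι ι R) (d : ℕ → ι → R)
    (hd : ∀ k, d (k + 1) = A *ᵥ d k) (k : ℕ) : d k = (A ^ k) *ᵥ d 0 := by
  induction k with
  | zero => simp
  | succ k ih => rw [hd, ih, mulVec_mulVec, ← pow_succ']

theorem relaxed_step_residual_eq_mulVec (T : Matrix ι ι R) (γ : R) (r x x' y y' : ι → R)
    (hy : y = T *ᵥ x + r) (hx' : x' = γ • y + (1 - γ) • x) (hy' : y' = T *ᵥ x' + r) :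
    y' - x' = (γ • T + (1 - γ) • (1 : Matrix ι ι R)) *ᵥ (y - x) := by
  subst hy hx' hy'
  simp only [mulVec_add, mulVec_smul, add_mulVec, smul_mulVec, one_mulVec, mulVec_sub]
  module

end

theorem stmt_8_general {n : ℕ}
    (T : Matrix (Fin n) (Fin n) ℝ) (γ : ℝ) (r : Fin n → ℝ)
    (S : Matrix (Fin n) (Fin n) ℝ)
    (hS : S = γ • T + (1 - γ) • (1 : Matrix (Fin n) (Fin n) ℝ))
    (phat p : ℕ → Fin n → ℝ)
    (hhat : ∀ k, 1 ≤ k → phat k = T.mulVec (p (k - 1)) + r)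
    (hrel : ∀ k, 1 ≤ k → p k = γ • phat k + (1 - γ) • p (k - 1)) :
    ∀ k : ℕ, phat (k + 1) - p k = (S ^ k).mulVec (phat 1 - p 0) := by
  subst hS
  refine eq_pow_mulVec_of_succ_eq_mulVec _ (fun k ↦ phat (k + 1) - p k) fun k ↦ ?_
  exact relaxed_step_residual_eq_mulVec T γ r (p k) (p (k + 1)) (phat (k + 1)) (phat (k + 2))
    (hhat (k + 1) k.succ_pos) (hrel (k + 1) k.succ_pos) (hhat (k + 2) (by omega))

theorem stmt_8 {n : ℕ} (hn : 0 < n)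
    (T : Matrix (Fin n) (Fin n) ℝ) (γ : ℝ) (r : Fin n → ℝ)
    (S : Matrix (Fin n) (Fin n) ℝ)
    (hS : S = γ • T + (1 - γ) • (1 : Matrix (Fin n) (Fin n) ℝ))
    (phat p : ℕ → Fin n → ℝ)
    (hhat : ∀ k, 1 ≤ k → phat k = T.mulVec (p (k - 1)) + r)
    (hrel : ∀ k, 1 ≤ k → p k = γ • phat k + (1 - γ) • p (k - 1)) :
    ∀ k : ℕ, phat (k + 1) - p k = (S ^ k).mulVec (phat 1 - p 0) :=
  stmt_8_general T γ r S hS phat p hhat hrel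
end

section
/- Let T be an n×n real matrix, γ a real number, r ∈ ℝⁿ, and S := γ·T + (1−γ)·I. Suppose sequences (p̂_k)_{k≥1} and (p_k)_{k≥0} in ℝⁿ satisfy p̂_k = T·p_{k−1} + r for all k ≥ 1 and p_k = γ·p̂_k + (1−γ)·p_{k−1} for all k ≥ 1. Then for every natural number K ≥ 1, p̂_K − p_0 = (S^{K−1} + γ·∑_{k=0}^{K−2} S^k)·(p̂_1 − p_0), where the sum is empty (the zero matrix) when K = 1. -/
/-!
Write `dₖ = p̂ₖ₊₁ - pₖ`. Substituting the relaxation step into the update gives `dₖ₊₁ = S dₖ`,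
so `dₖ = Sᵏ d₀`, while `pₖ₊₁ - pₖ = γ dₖ`. Telescoping the latter,
`p̂ₖ₊₁ - p₀ = dₖ + γ (d₀ + ⋯ + dₖ₋₁) = (Sᵏ + γ ∑_{j<k} Sʲ) d₀`.
-/

open Matrix

namespace RelaxedFixedPointIteration

variable {ι R : Type*} [CommRing R] {γ : R} {phat p : ℕ → ι → R}

theorem iterate_sub_zero_eq_smul_sum
    (hrel : ∀ k, p (k + 1) = γ • phat (k + 1) + (1 - γ) • p k) (k : ℕ) :
    p k - p 0 = γ • ∑ j ∈ Finset.range k, (phat (j + 1) - p j) := by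
  have hstep : ∀ j, p (j + 1) - p j = γ • (phat (j + 1) - p j) := fun j => by
    rw [hrel j]
    module
  simp_rw [Finset.smul_sum, ← hstep, Finset.sum_range_sub]

variable [Fintype ι] [DecidableEq ι] {T S : Matrix ι ι R} {r : ι → R}

theorem residual_succ_eq_mulVec (hS : S = γ • T + (1 - γ) • 1)
    (hhat : ∀ k, phat (k + 1) = T *ᵥ p k + r)
    (hrel : ∀ k, p (k + 1) = γ • phat (k + 1) + (1 - γ) • p k) (k : ℕ) :
    phat (k + 2) - p (k + 1) = S *ᵥ (phat (k + 1) - p k) := by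
  rw [hhat (k + 1), hrel k, hhat k, hS]
  simp only [add_mulVec, smul_mulVec, one_mulVec, mulVec_sub, mulVec_add, mulVec_smul]
  module

theorem residual_eq_pow_mulVec (hS : S = γ • T + (1 - γ) • 1)
    (hhat : ∀ k, phat (k + 1) = T *ᵥ p k + r)
    (hrel : ∀ k, p (k + 1) = γ • phat (k + 1) + (1 - γ) • p k) (k : ℕ) :
    phat (k + 1) - p k = (S ^ k) *ᵥ (phat 1 - p 0) := by
  induction k with
  | zero => simp
  | succ k ih =>
    rw [residual_succ_eq_mulVec hS hhat hrel, ih, mulVec_mulVec, ← pow_succ']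

theorem update_sub_zero_eq_mulVec (hS : S = γ • T + (1 - γ) • 1)
    (hhat : ∀ k, phat (k + 1) = T *ᵥ p k + r)
    (hrel : ∀ k, p (k + 1) = γ • phat (k + 1) + (1 - γ) • p k) (k : ℕ) :
    phat (k + 1) - p 0 = (S ^ k + γ • ∑ j ∈ Finset.range k, S ^ j) *ᵥ (phat 1 - p 0) := by
  calc phat (k + 1) - p 0 = (phat (k + 1) - p k) + (p k - p 0) := by abel
    _ = (S ^ k) *ᵥ (phat 1 - p 0) + γ • ∑ j ∈ Finset.range k, (S ^ j) *ᵥ (phat 1 - p 0) := by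
      rw [iterate_sub_zero_eq_smul_sum hrel, residual_eq_pow_mulVec hS hhat hrel k,
        Finset.sum_congr rfl fun j _ => residual_eq_pow_mulVec hS hhat hrel j]
    _ = _ := by rw [add_mulVec, smul_mulVec, sum_mulVec]

end RelaxedFixedPointIteration

theorem stmt_9_general {n : ℕ}
    (T : Matrix (Fin n) (Fin n) ℝ) (γ : ℝ) (r : Fin n → ℝ)
    (S : Matrix (Fin n) (Fin n) ℝ)
    (hS : S = γ • T + (1 - γ) • (1 : Matrix (Fin n) (Fin n) ℝ))
    (phat p : ℕ → Fin n → ℝ)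
    (hhat : ∀ k, 1 ≤ k → phat k = T.mulVec (p (k - 1)) + r)
    (hrel : ∀ k, 1 ≤ k → p k = γ • phat k + (1 - γ) • p (k - 1)) :
    ∀ K : ℕ, 1 ≤ K →
      phat K - p 0 =
        ((S ^ (K - 1) + γ • ∑ k ∈ Finset.range (K - 1), S ^ k)).mulVec
          (phat 1 - p 0) := by
  rintro K hK
  obtain ⟨k, rfl⟩ := Nat.exists_eq_add_of_le' hK
  simpa using RelaxedFixedPointIteration.update_sub_zero_eq_mulVec hS
    (fun k => by simpa using hhat (k + 1) (Nat.le_add_left 1 k))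
    (fun k => by simpa using hrel (k + 1) (Nat.le_add_left 1 k)) k

theorem stmt_9 {n : ℕ} (hn : 0 < n)
    (T : Matrix (Fin n) (Fin n) ℝ) (γ : ℝ) (r : Fin n → ℝ)
    (S : Matrix (Fin n) (Fin n) ℝ)
    (hS : S = γ • T + (1 - γ) • (1 : Matrix (Fin n) (Fin n) ℝ))
    (phat p : ℕ → Fin n → ℝ)
    (hhat : ∀ k, 1 ≤ k → phat k = T.mulVec (p (k - 1)) + r)
    (hrel : ∀ k, 1 ≤ k → p k = γ • phat k + (1 - γ) • p (k - 1)) :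
    ∀ K : ℕ, 1 ≤ K →
      phat K - p 0 =
        ((S ^ (K - 1) + γ • ∑ k ∈ Finset.range (K - 1), S ^ k)).mulVec
          (phat 1 - p 0) :=
  stmt_9_general T γ r S hS phat p hhat hrel
end

section
/- Define the fixed-stress splitting matrices M := [[A, −Dᵀ],[0, C_τ + D A⁻¹ Dᵀ]] and N := [[0, 0],[−D, D A⁻¹ Dᵀ]] as (n_u+n_p)×(n_u+n_p) block matrices. Then N·M⁻¹·N = 0, i.e., (M⁻¹N)² = 0. Consequently, for any right-hand side b and any starting vector x_0, the fixed-stress iteration x_{k+1} = M⁻¹(N x_k + b) reaches the exact solution of (M − N)x = b after two steps: x_2 = (M − N)⁻¹ b. -/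
/-!
Writing `K := [[0, 0], [-D A⁻¹, 0]]`, one has `N = K M`, and `K N = 0` because the first block
row of `N` vanishes. Hence `N M⁻¹ N = K N = 0`, so the Neumann series of
`(M - N)⁻¹ = (1 - M⁻¹ N)⁻¹ M⁻¹` stops after two terms: `(M - N)⁻¹ = M⁻¹ + M⁻¹ N M⁻¹`, which is
exactly the operator applied to `b` by the second iterate.
-/

open Matrix
open scoped ComplexOrder

namespace Matrix

variable {m n R : Type*} [Fintype m] [Fintype n]

theorem fromBlocks_zero_mul_fromBlocks_zero [NonUnitalNonAssocSemiring R] (X Y : Matrix n m R)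
    (Z : Matrix n n R) : fromBlocks (0 : Matrix m m R) 0 X 0 * fromBlocks 0 0 Y Z = 0 := by
  simp [fromBlocks_multiply]

variable [DecidableEq m] [DecidableEq n] [CommRing R]

theorem inv_sub_eq_of_mul_inv_mul_eq_zero {M N : Matrix n n R} (hM : IsUnit M)
    (hN : N * M⁻¹ * N = 0) : (M - N)⁻¹ = M⁻¹ * N * M⁻¹ + M⁻¹ := by
  have hMM : M * M⁻¹ = 1 := mul_nonsing_inv M ((isUnit_iff_isUnit_det M).mp hM)
  refine inv_eq_right_inv ?_
  calc (M - N) * (M⁻¹ * N * M⁻¹ + M⁻¹)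
      = M * M⁻¹ * N * M⁻¹ + M * M⁻¹ - N * M⁻¹ * N * M⁻¹ - N * M⁻¹ := by noncomm_ring
    _ = 1 := by rw [hMM, hN]; noncomm_ring

theorem splitting_iterate_two (M N : Matrix n n R) (b : n → R) (x : ℕ → n → R)
    (hx : ∀ k, x (k + 1) = M⁻¹ *ᵥ (N *ᵥ x k + b)) :
    x 2 = (M⁻¹ * N) ^ 2 *ᵥ x 0 + (M⁻¹ * N * M⁻¹ + M⁻¹) *ᵥ b := by
  rw [hx 1, hx 0]
  simp only [mulVec_add, mulVec_mulVec, add_mulVec, pow_two, Matrix.mul_assoc, add_assoc]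

theorem fromBlocks_zero_mul_fromBlocks_zero₂₁ {A : Matrix m m R} (hA : IsUnit A)
    (D : Matrix n m R) (E : Matrix m n R) (S : Matrix n n R) :
    fromBlocks 0 0 (-(D * A⁻¹)) 0 * fromBlocks A (-E) 0 S =
      fromBlocks 0 0 (-D) (D * A⁻¹ * E) := by
  have hAA : A⁻¹ * A = 1 := nonsing_inv_mul A ((isUnit_iff_isUnit_det A).mp hA)
  simp [fromBlocks_multiply, Matrix.mul_assoc, hAA]

theorem fromBlocks_zero_mul_inv_mul_self {A : Matrix m m R} {S : Matrix n n R}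
    (hA : IsUnit A) (hS : IsUnit S) (D : Matrix n m R) (E : Matrix m n R) :
    fromBlocks (0 : Matrix m m R) 0 (-D) (D * A⁻¹ * E) * (fromBlocks A (-E) 0 S)⁻¹ *
      fromBlocks 0 0 (-D) (D * A⁻¹ * E) = 0 := by
  have hM : IsUnit (fromBlocks A (-E) 0 S) := isUnit_fromBlocks_zero₂₁.mpr ⟨hA, hS⟩
  rw [← fromBlocks_zero_mul_fromBlocks_zero₂₁ hA D E S, Matrix.mul_assoc _ (fromBlocks A _ _ _),
    mul_nonsing_inv _ ((isUnit_iff_isUnit_det _).mp hM), Matrix.mul_one,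
    fromBlocks_zero_mul_fromBlocks_zero₂₁ hA, fromBlocks_zero_mul_fromBlocks_zero]

end Matrix

theorem Matrix.PosDef.add_mul_inv_mul_conjTranspose {m n 𝕜 : Type*} [Fintype m] [Fintype n]
    [DecidableEq m] [RCLike 𝕜] {S : Matrix n n 𝕜} {A : Matrix m m 𝕜} (hS : S.PosDef)
    (hA : A.PosDef) (D : Matrix n m 𝕜) : (S + D * A⁻¹ * Dᴴ).PosDef :=
  hS.add_posSemidef (hA.inv.posSemidef.mul_mul_conjTranspose_same D)

theorem stmt_12_general {nu np : ℕ}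
    (A : Matrix (Fin nu) (Fin nu) ℝ)
    (B C : Matrix (Fin np) (Fin np) ℝ)
    (D : Matrix (Fin np) (Fin nu) ℝ) (τ : ℝ) (hτ : 0 < τ)
    (hA : A.PosDef) (hB : B.PosDef) (hC : C.PosDef)
    (M N : Matrix (Fin nu ⊕ Fin np) (Fin nu ⊕ Fin np) ℝ)
    (hM : M = fromBlocks A (-Dᵀ) 0 ((C + τ • B) + D * A⁻¹ * Dᵀ))
    (hN : N = fromBlocks 0 0 (-D) (D * A⁻¹ * Dᵀ)) :
    N * M⁻¹ * N = 0 ∧ (M⁻¹ * N) ^ 2 = 0 ∧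
      ∀ (b : Fin nu ⊕ Fin np → ℝ) (x : ℕ → Fin nu ⊕ Fin np → ℝ),
        (∀ k : ℕ, x (k + 1) = M⁻¹.mulVec (N.mulVec (x k) + b)) →
          x 2 = (M - N)⁻¹.mulVec b := by
  have hS : ((C + τ • B) + D * A⁻¹ * Dᵀ).PosDef := by
    simpa using (hC.add (hB.smul hτ)).add_mul_inv_mul_conjTranspose hA D
  have hM_unit : IsUnit M := by
    rw [hM]
    exact isUnit_fromBlocks_zero₂₁.mpr ⟨hA.isUnit, hS.isUnit⟩
  have hNMN : N * M⁻¹ * N = 0 := by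
    rw [hM, hN]
    exact fromBlocks_zero_mul_inv_mul_self hA.isUnit hS.isUnit D Dᵀ
  have hsq : (M⁻¹ * N) ^ 2 = 0 := by
    rw [pow_two, Matrix.mul_assoc, ← Matrix.mul_assoc N, hNMN, Matrix.mul_zero]
  refine ⟨hNMN, hsq, fun b x hx => ?_⟩
  rw [splitting_iterate_two M N b x hx, hsq, inv_sub_eq_of_mul_inv_mul_eq_zero hM_unit hNMN,
    zero_mulVec, zero_add]

theorem stmt_12 {nu np : ℕ} (hnu : 0 < nu) (hnp : 0 < np)
    (A : Matrix (Fin nu) (Fin nu) ℝ)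
    (B C : Matrix (Fin np) (Fin np) ℝ)
    (D : Matrix (Fin np) (Fin nu) ℝ) (τ : ℝ) (hτ : 0 < τ)
    (hA : A.PosDef) (hB : B.PosDef) (hC : C.PosDef)
    (M N : Matrix (Fin nu ⊕ Fin np) (Fin nu ⊕ Fin np) ℝ)
    (hM : M = fromBlocks A (-Dᵀ) 0 ((C + τ • B) + D * A⁻¹ * Dᵀ))
    (hN : N = fromBlocks 0 0 (-D) (D * A⁻¹ * Dᵀ)) :
    N * M⁻¹ * N = 0 ∧ (M⁻¹ * N) ^ 2 = 0 ∧
      ∀ (b : Fin nu ⊕ Fin np → ℝ) (x : ℕ → Fin nu ⊕ Fin np → ℝ),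
        (∀ k : ℕ, x (k + 1) = M⁻¹.mulVec (N.mulVec (x k) + b)) →
          x 2 = (M - N)⁻¹.mulVec b :=
  stmt_12_general A B C D τ hτ hA hB hC M N hM hN
end

section
/- The block matrix [[A, −Dᵀ],[D, C_τ]] of size (n_u+n_p)×(n_u+n_p) is invertible. -/
open Matrix

open scoped ComplexOrder

/-- The Schur complement of `A` is `S + D A⁻¹ Dᴴ`, a positive definite matrix plus a positive
semidefinite one. -/
theorem Matrix.PosDef.isUnit_fromBlocks_neg_conjTranspose {m n 𝕜 : Type*} [Fintype m]
    [Fintype n] [DecidableEq m] [DecidableEq n] [RCLike 𝕜] {A : Matrix m m 𝕜}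
    {S : Matrix n n 𝕜} (hA : A.PosDef) (hS : S.PosDef) (D : Matrix n m 𝕜) :
    IsUnit (fromBlocks A (-Dᴴ) D S) := by
  have : Invertible A := hA.isUnit.invertible
  have hSchur : (S - D * ⅟A * -Dᴴ).PosDef := by
    rw [invOf_eq_nonsing_inv, Matrix.mul_neg, sub_neg_eq_add]
    exact hS.add_posSemidef (hA.inv.posSemidef.mul_mul_conjTranspose_same D)
  exact isUnit_fromBlocks_iff_of_invertible₁₁.mpr hSchur.isUnit

theorem stmt_13_general {nu np : ℕ}
    (A : Matrix (Fin nu) (Fin nu) ℝ)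
    (B C : Matrix (Fin np) (Fin np) ℝ)
    (D : Matrix (Fin np) (Fin nu) ℝ) (τ : ℝ) (hτ : 0 < τ)
    (hA : A.PosDef) (hB : B.PosDef) (hC : C.PosDef) :
    IsUnit (fromBlocks A (-Dᵀ) D (C + τ • B)) := by
  have hCτ : (C + τ • B).PosDef := hC.add (hB.smul hτ)
  simpa [conjTranspose_eq_transpose_of_trivial] using hA.isUnit_fromBlocks_neg_conjTranspose hCτ D

theorem stmt_13 {nu np : ℕ} (hnu : 0 < nu) (hnp : 0 < np)
    (A : Matrix (Fin nu) (Fin nu) ℝ)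
    (B C : Matrix (Fin np) (Fin np) ℝ)
    (D : Matrix (Fin np) (Fin nu) ℝ) (τ : ℝ) (hτ : 0 < τ)
    (hA : A.PosDef) (hB : B.PosDef) (hC : C.PosDef) :
    IsUnit (fromBlocks A (-Dᵀ) D (C + τ • B)) :=
  stmt_13_general A B C D τ hτ hA hB hC
end
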